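/- arXiv:1603.00722 — 5 statements merged into one kernel-verified Lean document; each statement's English description precedes it below -/
import Mathlib

section
/- (Atkinson dissection) For complex a, b with Re(a) > 1 and Re(b) > 1, and for all x ∈ [0,1], ζ₁(a,x) ζ₁(b,x) = ζ₁(a+b, x) + Σ_{n=1}^∞ { ζ₁(a, n+x)/(n+x)^b + ζ₁(b, n+x)/(n+x)^a }, where the series converges absolutely. -/
/-!
Expand `ζ₁(a,x) ζ₁(b,x)` as the absolutely convergent double series
`∑_{m,n ≥ 0} (m+1+x)^{-a} (n+1+x)^{-b}` and split `ℕ × ℕ` into the diagonal `m = n`, which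
gives `ζ₁(a+b,x)`, and the two triangles `m > n` and `m < n`. Summing each triangle along
the rows of fixed smaller index `n` gives `ζ₁(a,n+1+x) (n+1+x)^{-b}`, resp.
`(n+1+x)^{-a} ζ₁(b,n+1+x)`. The resulting series converges absolutely because
`|ζ₁(c,n+1+x)| ≤ ∑_k |(k+1+x)^{-c}|` uniformly in `n`.
-/

/-- The auxiliary Hurwitz zeta function `ζ₁(a,x) = ∑_{k=1}^∞ (k+x)^{-a}` (for `Re a > 1`). -/
noncomputable def zeta1 (a : ℂ) (x : ℝ) : ℂ := ∑' k : ℕ, ((k : ℂ) + 1 + x) ^ (-a)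

def diagTriangleEquiv : ℕ ⊕ (ℕ × ℕ ⊕ ℕ × ℕ) ≃ ℕ × ℕ where
  toFun := Sum.elim (fun n => (n, n))
    (Sum.elim (fun p => (p.1 + p.2 + 1, p.1)) (fun p => (p.1, p.1 + p.2 + 1)))
  invFun p :=
    if p.1 = p.2 then .inl p.1
    else if p.2 < p.1 then .inr (.inl (p.2, p.1 - p.2 - 1))
    else .inr (.inr (p.1, p.2 - p.1 - 1))
  left_inv := by
    rintro (n | ⟨n, k⟩ | ⟨n, k⟩)
    · simp
    · dsimp only [Sum.elim_inr, Sum.elim_inl]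
      rw [if_neg (by omega), if_pos (by omega), show n + k + 1 - n - 1 = k by omega]
    · dsimp only [Sum.elim_inr]
      rw [if_neg (by omega), if_neg (by omega), show n + k + 1 - n - 1 = k by omega]
  right_inv := by
    rintro ⟨m, n⟩
    dsimp only
    split_ifs <;> simp <;> omega

theorem tsum_eq_diag_add_triangles {E : Type*} [NormedAddCommGroup E] [CompleteSpace E]
    {F : ℕ × ℕ → E} (hF : Summable F) :
    ∑' p, F p =
      ∑' n, F (n, n) + ∑' n, (∑' k, F (n + k + 1, n) + ∑' k, F (n, n + k + 1)) := by
  have he := diagTriangleEquiv.injective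
  have hdiag : Summable fun n => F (n, n) := hF.comp_injective (he.comp Sum.inl_injective)
  have hlower : Summable fun p : ℕ × ℕ => F (p.1 + p.2 + 1, p.1) :=
    hF.comp_injective (he.comp (Sum.inr_injective.comp Sum.inl_injective))
  have hupper : Summable fun p : ℕ × ℕ => F (p.1, p.1 + p.2 + 1) :=
    hF.comp_injective (he.comp (Sum.inr_injective.comp Sum.inr_injective))
  have hsum := diagTriangleEquiv.hasSum_iff.1 (hdiag.hasSum.sum (hlower.hasSum.sum hupper.hasSum))
  rw [hsum.tsum_eq, hlower.tsum_prod, hupper.tsum_prod, hlower.prod.tsum_add hupper.prod]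

theorem norm_tsum_nat_add_succ_le {E : Type*} [SeminormedAddCommGroup E] {f : ℕ → E}
    (hf : Summable (‖f ·‖)) (n : ℕ) : ‖∑' k, f (n + k + 1)‖ ≤ ∑' k, ‖f k‖ := by
  have hshift : Function.Injective fun k => n + k + 1 :=
    (add_left_injective 1).comp (add_right_injective n)
  calc ‖∑' k, f (n + k + 1)‖ ≤ ∑' k, ‖f (n + k + 1)‖ :=
        norm_tsum_le_tsum_norm (hf.comp_injective hshift)
    _ ≤ ∑' k, ‖f k‖ := tsum_comp_le_tsum_of_inj hf (fun _ => norm_nonneg _) hshift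

section TriangleSums

variable {R : Type*} [NormedRing R] {f g : ℕ → R}

theorem summable_norm_triangle_sums (hf : Summable (‖f ·‖)) (hg : Summable (‖g ·‖)) :
    Summable fun n => ‖(∑' k, f (n + k + 1)) * g n + f n * ∑' k, g (n + k + 1)‖ := by
  refine .of_nonneg_of_le (fun _ => norm_nonneg _) (fun n => ?_)
    ((hg.mul_left (∑' k, ‖f k‖)).add (hf.mul_right (∑' k, ‖g k‖)))
  calc _ ≤ ‖∑' k, f (n + k + 1)‖ * ‖g n‖ + ‖f n‖ * ‖∑' k, g (n + k + 1)‖ :=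
        (norm_add_le _ _).trans (add_le_add (norm_mul_le _ _) (norm_mul_le _ _))
    _ ≤ (∑' k, ‖f k‖) * ‖g n‖ + ‖f n‖ * ∑' k, ‖g k‖ := by
        gcongr
        · exact norm_tsum_nat_add_succ_le hf n
        · exact norm_tsum_nat_add_succ_le hg n

theorem tsum_mul_tsum_eq_diag_add_triangles [CompleteSpace R] (hf : Summable (‖f ·‖))
    (hg : Summable (‖g ·‖)) :
    (∑' n, f n) * ∑' n, g n = ∑' n, f n * g n +
      ∑' n, ((∑' k, f (n + k + 1)) * g n + f n * ∑' k, g (n + k + 1)) := by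
  have hshift (n : ℕ) : Function.Injective fun k => n + k + 1 :=
    (add_left_injective 1).comp (add_right_injective n)
  have hprod := summable_mul_of_summable_norm hf hg
  rw [tsum_mul_tsum_of_summable_norm hf hg, tsum_eq_diag_add_triangles hprod]
  refine congrArg (_ + ·) (tsum_congr fun n => ?_)
  exact congrArg₂ (· + ·) ((hf.of_norm.comp_injective (hshift n)).tsum_mul_right (g n))
    ((hg.of_norm.comp_injective (hshift n)).tsum_mul_left (f n))

end TriangleSums

theorem summable_norm_nat_add_one_add_cpow_neg {c : ℂ} (hc : 1 < c.re) {x : ℝ} (hx : 0 ≤ x) :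
    Summable fun k : ℕ => ‖((k : ℂ) + 1 + x) ^ (-c)‖ := by
  refine ((Real.summable_one_div_nat_add_rpow (1 + x) c.re).2 hc).congr fun k => ?_
  have hpos : 0 < (k : ℝ) + 1 + x := by positivity
  rw [← add_assoc, abs_of_pos hpos, one_div, ← Real.rpow_neg hpos.le, ← Complex.neg_re,
    ← Complex.norm_cpow_eq_rpow_re_of_pos hpos]
  push_cast
  rfl

theorem zeta1_nat_add_one_add (c : ℂ) (x : ℝ) (n : ℕ) :
    zeta1 c (n + 1 + x) = ∑' k : ℕ, (((n + k + 1 : ℕ) : ℂ) + 1 + x) ^ (-c) := by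
  refine tsum_congr fun k => ?_
  push_cast
  ring_nf

theorem zeta1_add_eq_tsum_mul (a b : ℂ) {x : ℝ} (hx : 0 ≤ x) :
    zeta1 (a + b) x = ∑' k : ℕ, ((k : ℂ) + 1 + x) ^ (-a) * ((k : ℂ) + 1 + x) ^ (-b) := by
  refine tsum_congr fun k => ?_
  have hne : (k : ℂ) + 1 + x ≠ 0 := by exact_mod_cast (by positivity : (k : ℝ) + 1 + x ≠ 0)
  rw [neg_add, Complex.cpow_add _ _ hne]

/-- Atkinson's dissection: for `Re a > 1`, `Re b > 1` and `x ∈ [0,1]`,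
`ζ₁(a,x) ζ₁(b,x) = ζ₁(a+b,x) + ∑_{n=1}^∞ { ζ₁(a,n+x)/(n+x)^b + ζ₁(b,n+x)/(n+x)^a }`,
the series converging absolutely (the sum over `n ≥ 1` is written with index shifted by 1). -/
theorem atkinson_dissection (a b : ℂ) (ha : 1 < a.re) (hb : 1 < b.re)
    (x : ℝ) (hx : x ∈ Set.Icc (0:ℝ) 1) :
    Summable (fun n : ℕ => ‖zeta1 a ((n : ℝ) + 1 + x) / ((n : ℂ) + 1 + x) ^ b
        + zeta1 b ((n : ℝ) + 1 + x) / ((n : ℂ) + 1 + x) ^ a‖) ∧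
    zeta1 a x * zeta1 b x =
      zeta1 (a + b) x + ∑' n : ℕ, (zeta1 a ((n : ℝ) + 1 + x) / ((n : ℂ) + 1 + x) ^ b
        + zeta1 b ((n : ℝ) + 1 + x) / ((n : ℂ) + 1 + x) ^ a) := by
  have hf := summable_norm_nat_add_one_add_cpow_neg ha hx.1
  have hg := summable_norm_nat_add_one_add_cpow_neg hb hx.1
  simp only [div_eq_mul_inv, ← Complex.cpow_neg, zeta1_nat_add_one_add,
    zeta1_add_eq_tsum_mul a b hx.1, mul_comm _ ((_ : ℂ) ^ (-a))]
  have hsummable := summable_norm_triangle_sums hf hg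
  have hdissection := tsum_mul_tsum_eq_diag_add_triangles hf hg
  exact ⟨hsummable, hdissection⟩
end

section
/- For real α with 1 < α < 2, the beta-function identity 2B(1−α, 2α−1) + B(1−α, 1−α) = 2(1 − cos(πα)) B(1−α, 2α−1) holds. -/
/-- The beta function `B(x,y) = Γ(x)Γ(y)/Γ(x+y)` (via the analytically continued Gamma). -/
noncomputable def cbeta (x y : ℂ) : ℂ := Complex.Gamma x * Complex.Gamma y / Complex.Gamma (x + y)

/-! Both beta values share the factor `Γ(1-α)`, so the identity reduces to
`Γ(1-α)/Γ(2-2α) = -2 cos(πα) Γ(2α-1)/Γ(α)`. Euler's reflection formula applied at `α` and at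
`2α-1` expresses both sides through `sin(πα)` and `sin(π(2α-1)) = -2 sin(πα) cos(πα)`. -/

open Complex
open scoped Real

namespace Complex

theorem Gamma_one_sub_eq_div {z : ℂ} (hz : Gamma z ≠ 0) :
    Gamma (1 - z) = π / (sin (π * z) * Gamma z) := by
  rw [← div_div, ← Gamma_mul_Gamma_one_sub, mul_div_cancel_left₀ _ hz]

theorem Gamma_one_sub_div_Gamma_two_sub_two_mul {a : ℂ} (ha : sin (π * a) ≠ 0)
    (h2a : Gamma (2 * a - 1) ≠ 0) :
    Gamma (1 - a) / Gamma (2 - 2 * a) = -2 * cos (π * a) * Gamma (2 * a - 1) / Gamma a := by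
  have hπ : (π : ℂ) ≠ 0 := ofReal_ne_zero.mpr Real.pi_ne_zero
  have hΓa : Gamma a ≠ 0 :=
    left_ne_zero_of_mul (by rw [Gamma_mul_Gamma_one_sub]; exact div_ne_zero hπ ha)
  have hsin : sin (π * (2 * a - 1)) = -2 * sin (π * a) * cos (π * a) := by
    rw [show (π : ℂ) * (2 * a - 1) = 2 * (π * a) - π by ring, sin_sub, sin_two_mul, cos_pi,
      sin_pi]
    ring
  rw [Gamma_one_sub_eq_div hΓa, show (2 : ℂ) - 2 * a = 1 - (2 * a - 1) by ring,
    Gamma_one_sub_eq_div h2a, div_div_eq_mul_div, hsin]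
  field_simp

end Complex

theorem cbeta_one_sub_self {a : ℂ} (ha : sin (π * a) ≠ 0) (h2a : Gamma (2 * a - 1) ≠ 0) :
    cbeta (1 - a) (1 - a) = -2 * cos (π * a) * cbeta (1 - a) (2 * a - 1) := by
  have hΓ := Gamma_one_sub_div_Gamma_two_sub_two_mul ha h2a
  rw [cbeta, cbeta, show 1 - a + (1 - a) = 2 - 2 * a by ring,
    show 1 - a + (2 * a - 1) = a by ring, mul_div_assoc, hΓ]
  ring

theorem beta_identity (α : ℝ) (h1 : 1 < α) (h2 : α < 2) :
    2 * cbeta (1 - (α : ℂ)) (2 * (α : ℂ) - 1) + cbeta (1 - (α : ℂ)) (1 - (α : ℂ)) =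
      2 * (1 - Complex.cos (Real.pi * α)) * cbeta (1 - (α : ℂ)) (2 * (α : ℂ) - 1) := by
  have hsin : Real.sin (π * α) < 0 := by
    rw [show π * α = (π * α - π) + π by ring, Real.sin_add_pi,
      neg_neg_iff_pos]
    exact Real.sin_pos_of_pos_of_lt_pi (by nlinarith [Real.pi_pos]) (by nlinarith [Real.pi_pos])
  have hΓ : Gamma (2 * (α : ℂ) - 1) ≠ 0 := Gamma_ne_zero_of_re_pos (by simp; linarith)
  have key := cbeta_one_sub_self (by exact_mod_cast hsin.ne) hΓ
  linear_combination key
end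

section
/- The limit as ε → 0⁺ of (1/2)(4π)^{−4+ε} Γ(1−ε/2)² [ ζ(2−ε)² + (1 − cos(πε)) B(3−2ε, −1+ε) ζ(3−2ε) ] equals 2^{−11}/9; in particular, (1 − cos(πε)) B(3−2ε, −1+ε) ζ(3−2ε) → 0 as ε → 0⁺. -/
/-!
Every factor is continuous at `ε = 0` except `B(3 - 2ε, -1 + ε) = Γ(3 - 2ε) Γ(-1 + ε) / Γ(2 - ε)`,
where `Γ(-1 + ε)` has a simple pole (`ε Γ(-1 + ε) → -1`). Since `1 - cos (π ε)` vanishes to second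
order, `(1 - cos (π ε)) / ε → 0` absorbs the pole, the bracket tends to `ζ(2)² = π⁴ / 36`, and the
prefactor to `(4π)⁻⁴ / 2`. The limits are taken in the punctured complex neighbourhood of `0` and
then restricted to `ε > 0`.
-/

open Filter Topology

lemma Complex.continuousAt_Gamma_of_re_pos {s : ℂ} (hs : 0 < s.re) : ContinuousAt Gamma s := by
  refine (differentiableAt_Gamma s fun m hm => ?_).continuousAt
  have := congrArg re hm
  simp only [neg_re, natCast_re] at this
  linarith [(m.cast_nonneg : (0 : ℝ) ≤ m)]

lemma tendsto_ofReal_nhdsGT_zero_nhdsNE : Tendsto (fun x : ℝ => (x : ℂ)) (𝓝[>] 0) (𝓝[≠] 0) :=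
  Complex.continuous_ofReal.continuousWithinAt.tendsto_nhdsWithin fun _ hx => by
    simpa using (Set.mem_Ioi.mp hx).ne'

lemma tendsto_one_sub_cos_mul_div_self (c : ℂ) :
    Tendsto (fun z : ℂ => (1 - Complex.cos (c * z)) / z) (𝓝[≠] 0) (𝓝 0) := by
  have hderiv : HasDerivAt (fun z : ℂ => 1 - Complex.cos (c * z)) 0 0 := by
    simpa using ((Complex.hasDerivAt_cos (c * 0)).comp 0 ((hasDerivAt_id 0).const_mul c)).const_sub 1
  simpa [div_eq_inv_mul] using hderiv.tendsto_slope_zero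

lemma tendsto_self_mul_Gamma_neg_one_add :
    Tendsto (fun z : ℂ => z * Complex.Gamma (-1 + z)) (𝓝[≠] 0) (𝓝 (-1)) := by
  have hquot : Tendsto (fun z : ℂ => z * Complex.Gamma z / (-1 + z)) (𝓝[≠] 0) (𝓝 (1 / (-1 + 0))) :=
    Complex.tendsto_self_mul_Gamma_nhds_zero.div
      ((by fun_prop : Continuous fun z : ℂ => -1 + z).tendsto 0 |>.mono_left nhdsWithin_le_nhds)
      (by norm_num)
  have hne : ∀ᶠ z : ℂ in 𝓝[≠] 0, -1 + z ≠ 0 :=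
    nhdsWithin_le_nhds <| (by fun_prop : Continuous fun z : ℂ => -1 + z).continuousAt.eventually_ne
      (by norm_num)
  refine (hquot.congr' ?_).trans (by norm_num)
  filter_upwards [hne] with z hz
  have hrec : Complex.Gamma z = (-1 + z) * Complex.Gamma (-1 + z) := by
    simpa using Complex.Gamma_add_one _ hz
  rw [hrec]
  field_simp

lemma tendsto_one_sub_cos_mul_Gamma_neg_one_add_mul (c : ℂ) {f : ℂ → ℂ} (hf : ContinuousAt f 0) :
    Tendsto (fun z : ℂ => (1 - Complex.cos (c * z)) * Complex.Gamma (-1 + z) * f z)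
      (𝓝[≠] 0) (𝓝 0) := by
  have hprod := ((tendsto_one_sub_cos_mul_div_self c).mul tendsto_self_mul_Gamma_neg_one_add).mul
    (hf.tendsto.mono_left nhdsWithin_le_nhds)
  rw [zero_mul, zero_mul] at hprod
  refine hprod.congr' ?_
  filter_upwards [self_mem_nhdsWithin] with z (hz : z ≠ 0)
  field_simp

lemma tendsto_one_sub_cos_mul_cbeta_mul_riemannZeta :
    Tendsto (fun z : ℂ => (1 - Complex.cos (Real.pi * z)) * cbeta (3 - 2 * z) (-1 + z)
      * riemannZeta (3 - 2 * z)) (𝓝[≠] 0) (𝓝 0) := by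
  have hreg : ContinuousAt
      (fun z : ℂ => Complex.Gamma (3 - 2 * z) / Complex.Gamma (2 - z) * riemannZeta (3 - 2 * z)) 0 := by
    refine ContinuousAt.mul (ContinuousAt.div ?_ ?_ ?_) ?_
    · exact (Complex.continuousAt_Gamma_of_re_pos (by norm_num)).comp_of_eq (by fun_prop) rfl
    · exact (Complex.continuousAt_Gamma_of_re_pos (by norm_num)).comp_of_eq (by fun_prop) rfl
    · exact Complex.Gamma_ne_zero_of_re_pos (by norm_num)
    · exact (differentiableAt_riemannZeta (by norm_num)).continuousAt.comp_of_eq (by fun_prop) rfl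
  refine (tendsto_one_sub_cos_mul_Gamma_neg_one_add_mul (Real.pi : ℂ) hreg).congr fun z => ?_
  rw [cbeta, show 3 - 2 * z + (-1 + z) = 2 - z by ring]
  ring

lemma tendsto_c1_nhdsNE :
    Tendsto (fun z : ℂ =>
        (1 / 2 : ℂ) * (4 * (Real.pi : ℂ)) ^ (-4 + z) * (Complex.Gamma (1 - z / 2)) ^ 2 *
          ((riemannZeta (2 - z)) ^ 2
            + (1 - Complex.cos (Real.pi * z)) * cbeta (3 - 2 * z) (-1 + z) * riemannZeta (3 - 2 * z)))
      (𝓝[≠] 0) (𝓝 ((2 : ℂ) ^ (-11 : ℤ) / 9)) := by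
  have hπ : (4 * Real.pi : ℂ) ≠ 0 := by simp [Real.pi_ne_zero]
  have hpre : ContinuousAt
      (fun z : ℂ => (1 / 2 : ℂ) * (4 * (Real.pi : ℂ)) ^ (-4 + z) * (Complex.Gamma (1 - z / 2)) ^ 2) 0 := by
    refine ContinuousAt.mul (ContinuousAt.mul continuousAt_const ?_) (ContinuousAt.pow ?_ 2)
    · exact (continuousAt_const_cpow hπ).comp_of_eq (by fun_prop) rfl
    · exact (Complex.continuousAt_Gamma_of_re_pos (by norm_num)).comp_of_eq (by fun_prop) rfl
  have hzeta : ContinuousAt (fun z : ℂ => riemannZeta (2 - z) ^ 2) 0 :=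
    ((differentiableAt_riemannZeta (by norm_num)).continuousAt.comp_of_eq (by fun_prop) rfl).pow 2
  convert (hpre.tendsto.mono_left nhdsWithin_le_nhds).mul
    ((hzeta.tendsto.mono_left nhdsWithin_le_nhds).add tendsto_one_sub_cos_mul_cbeta_mul_riemannZeta)
    using 2
  simp only [sub_zero, zero_div, add_zero, Complex.Gamma_one, riemannZeta_two]
  rw [Complex.cpow_neg, Complex.cpow_ofNat]
  field_simp
  norm_num

theorem c1_limit :
    Tendsto (fun ε : ℝ =>
        (1 / 2 : ℂ) * (4 * (Real.pi : ℂ)) ^ (-4 + (ε : ℂ)) * (Complex.Gamma (1 - (ε : ℂ) / 2)) ^ 2 *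
          ((riemannZeta (2 - (ε : ℂ))) ^ 2
            + (1 - Complex.cos (Real.pi * ε)) * cbeta (3 - 2 * (ε : ℂ)) (-1 + (ε : ℂ))
                * riemannZeta (3 - 2 * (ε : ℂ))))
      (𝓝[>] (0 : ℝ)) (𝓝 ((2 : ℂ) ^ (-11 : ℤ) / 9)) ∧
    Tendsto (fun ε : ℝ =>
        (1 - Complex.cos (Real.pi * ε)) * cbeta (3 - 2 * (ε : ℂ)) (-1 + (ε : ℂ))
          * riemannZeta (3 - 2 * (ε : ℂ)))
      (𝓝[>] (0 : ℝ)) (𝓝 0) :=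
  ⟨tendsto_c1_nhdsNE.comp tendsto_ofReal_nhdsGT_zero_nhdsNE,
    tendsto_one_sub_cos_mul_cbeta_mul_riemannZeta.comp tendsto_ofReal_nhdsGT_zero_nhdsNE⟩
end

section
/- For complex α with Re(α) > 1, Σ_{k=1}^∞ [Γ(α+k)/k!] {ζ(α+k) − 1} = Γ(α). -/
/-!
Writing `ζ(α+k+1) - 1 = ∑_{n ≥ 0} (n+2)^{-(α+k+1)}` turns the series into the double series
`∑_{n,k} Γ(α+k+1)/(k+1)! (n+2)^{-(α+k+1)}`. For fixed `n`, the binomial series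
`(1-x)^{-α} = ∑_k Γ(α+k)/(Γ(α) k!) x^k` at `x = 1/(n+2)` sums the `k`-series to
`Γ(α) ((n+1)^{-α} - (n+2)^{-α})`, and these telescope to `Γ(α)`. Summing in either order is
justified by `‖Γ(s)‖ ≤ Γ(Re s)`: the double series is dominated by its own value at the real
point `Re α`, whose terms are nonnegative and whose iterated sums are finite by the same
computation.
-/

open Complex
open scoped Nat

theorem hasSum_choose_mul_pow_one_div_one_sub_cpow (a : ℂ) {x : ℂ} (hx : ‖x‖ < 1) :
    HasSum (fun n : ℕ => Ring.choose (a + n - 1) n * x ^ n) (1 / (1 - x) ^ a) := by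
  have := (one_div_one_sub_cpow_hasFPowerSeriesOnBall_zero a).hasSum
    (y := x) (by simpa [Metric.eball, edist_dist, ← ofReal_norm] using hx)
  simpa [FormalMultilinearSeries.ofScalars_apply_eq, mul_comm] using this

theorem Gamma_mul_choose_add_sub_one {a : ℂ} (ha : ∀ k : ℕ, a ≠ -k) (n : ℕ) :
    Gamma a * Ring.choose (a + n - 1) n = Gamma (a + n) / n ! := by
  rw [← Ring.multichoose_eq, eq_div_iff (by exact_mod_cast n.factorial_ne_zero), mul_assoc,
    ← nsmul_eq_mul', Ring.factorial_nsmul_multichoose_eq_ascPochhammer,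
    Polynomial.ascPochhammer_smeval_eq_eval, ← Gamma_add_nat_div_Gamma_eq a ha,
    mul_div_cancel₀ _ (Gamma_ne_zero ha)]

theorem hasSum_Gamma_add_nat_div_factorial_mul_cpow {a : ℂ} (ha : ∀ k : ℕ, a ≠ -k) {x : ℝ}
    (hx : 1 < x) :
    HasSum (fun k : ℕ => Gamma (a + k) / k ! * (x : ℂ) ^ (-(a + k)))
      (Gamma a * (x - 1) ^ (-a)) := by
  have hx0 : (x : ℂ) ≠ 0 := ofReal_ne_zero.mpr (by positivity)
  have hxinv : ‖(x : ℂ)⁻¹‖ < 1 := by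
    rw [norm_inv, norm_real, Real.norm_of_nonneg (by positivity)]
    exact inv_lt_one_of_one_lt₀ hx
  have hval : (x : ℂ) ^ (-a) * (1 / (1 - (x : ℂ)⁻¹) ^ a) = (x - 1) ^ (-a) := by
    have hsub : (x : ℂ) - 1 = ((1 - x⁻¹ : ℝ) : ℂ) * (x : ℂ) := by
      push_cast; field_simp
    rw [hsub, mul_cpow_ofReal_nonneg (by simp [inv_le_one_of_one_le₀ hx.le]) (by positivity),
      one_div, ← cpow_neg]
    push_cast; ring
  have hsum := (hasSum_choose_mul_pow_one_div_one_sub_cpow a hxinv).mul_left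
    (Gamma a * (x : ℂ) ^ (-a))
  rw [mul_assoc, hval] at hsum
  refine hsum.congr_fun fun k => ?_
  rw [neg_add, cpow_add _ _ hx0, cpow_neg _ (k : ℂ), cpow_natCast, inv_pow,
    ← Gamma_mul_choose_add_sub_one ha k]
  ring

theorem norm_Gamma_le_Gamma_re {s : ℂ} (hs : 0 < s.re) : ‖Gamma s‖ ≤ Real.Gamma s.re := by
  rw [Gamma_eq_integral hs, GammaIntegral, Real.Gamma_eq_integral hs]
  refine (MeasureTheory.norm_integral_le_integral_norm _).trans_eq <|
    MeasureTheory.setIntegral_congr_fun measurableSet_Ioi fun x (hx : 0 < x) => ?_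
  rw [norm_mul, norm_real, Real.norm_of_nonneg (Real.exp_pos _).le,
    norm_cpow_eq_rpow_re_of_pos hx, sub_re, one_re]

theorem hasSum_nat_add_one_cpow_neg {s : ℂ} (hs : 1 < s.re) :
    HasSum (fun n : ℕ => ((n : ℂ) + 1) ^ (-s)) (riemannZeta s) := by
  have hsum : Summable fun n : ℕ => 1 / ((n : ℂ) + 1) ^ s := by
    exact_mod_cast (summable_nat_add_iff 1).mpr (summable_one_div_nat_cpow.mpr hs)
  rw [zeta_eq_tsum_one_div_nat_add_one_cpow hs]
  exact hsum.hasSum.congr_fun fun n => by rw [cpow_neg, one_div]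

theorem hasSum_nat_add_two_cpow_neg {s : ℂ} (hs : 1 < s.re) :
    HasSum (fun n : ℕ => ((n : ℂ) + 2) ^ (-s)) (riemannZeta s - 1) := by
  have := (hasSum_nat_add_iff' 1).mpr (hasSum_nat_add_one_cpow_neg hs)
  rw [Finset.sum_range_one, Nat.cast_zero, zero_add, one_cpow] at this
  refine this.congr_fun fun n => ?_
  push_cast
  ring_nf

theorem hasSum_nat_add_one_cpow_neg_sub_nat_add_two_cpow_neg {s : ℂ} (hs : 1 < s.re) :
    HasSum (fun n : ℕ => ((n : ℂ) + 1) ^ (-s) - ((n : ℂ) + 2) ^ (-s)) 1 := by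
  simpa using (hasSum_nat_add_one_cpow_neg hs).sub (hasSum_nat_add_two_cpow_neg hs)

noncomputable def gammaZetaTerm (s : ℂ) (p : ℕ × ℕ) : ℂ :=
  Gamma (s + p.2 + 1) / (p.2 + 1)! * ((p.1 : ℂ) + 2) ^ (-(s + p.2 + 1))

theorem hasSum_gammaZetaTerm_fixed_fst {s : ℂ} (hs : 0 < s.re) (n : ℕ) :
    HasSum (fun k => gammaZetaTerm s (n, k))
      (Gamma s * (((n : ℂ) + 1) ^ (-s) - ((n : ℂ) + 2) ^ (-s))) := by
  have hpoles : ∀ k : ℕ, s ≠ -k := by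
    simpa [Gamma_eq_zero_iff] using Gamma_ne_zero_of_re_pos hs
  have hx : (1 : ℝ) < n + 2 := by linarith [(n.cast_nonneg : (0 : ℝ) ≤ n)]
  have := (hasSum_nat_add_iff' 1).mpr (hasSum_Gamma_add_nat_div_factorial_mul_cpow hpoles hx)
  push_cast at this
  simp only [Finset.sum_range_one, Nat.cast_zero, add_zero, Nat.factorial_zero, Nat.cast_one,
    div_one] at this
  rw [show (n : ℂ) + 2 - 1 = n + 1 by ring, ← mul_sub] at this
  refine this.congr_fun fun k => ?_
  simp only [gammaZetaTerm, add_assoc]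

theorem hasSum_gammaZetaTerm_fixed_snd {s : ℂ} (hs : 0 < s.re) (k : ℕ) :
    HasSum (fun n => gammaZetaTerm s (n, k))
      (Gamma (s + k + 1) / (k + 1)! * (riemannZeta (s + k + 1) - 1)) := by
  have hre : 1 < (s + k + 1).re := by
    simp only [add_re, natCast_re, one_re]
    linarith [(k.cast_nonneg : (0 : ℝ) ≤ k)]
  exact (hasSum_nat_add_two_cpow_neg hre).mul_left (Gamma (s + k + 1) / (k + 1)!)

theorem norm_gammaZetaTerm_le {s : ℂ} (hs : 0 < s.re) (p : ℕ × ℕ) :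
    ‖gammaZetaTerm s p‖ ≤ (gammaZetaTerm s.re p).re := by
  have hk : 0 < (s + p.2 + 1).re := by
    simp only [add_re, natCast_re, one_re]
    linarith [(p.2.cast_nonneg : (0 : ℝ) ≤ p.2)]
  have hN : (0 : ℝ) < p.1 + 2 := by positivity
  have hcast : ((p.1 : ℂ) + 2) = ((p.1 + 2 : ℝ) : ℂ) := by push_cast; rfl
  have hre : (((s.re : ℂ) + p.2 + 1) : ℂ) = ((s.re + p.2 + 1 : ℝ) : ℂ) := by push_cast; rfl
  rw [gammaZetaTerm, gammaZetaTerm, hcast, hre, Gamma_ofReal, ← ofReal_neg,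
    ← ofReal_cpow hN.le, norm_mul, norm_div, norm_natCast, norm_cpow_eq_rpow_re_of_pos hN,
    ← ofReal_natCast (p.2 + 1)!, ← ofReal_div, ← ofReal_mul, ofReal_re]
  have hG := norm_Gamma_le_Gamma_re hk
  simp only [add_re, natCast_re, one_re, neg_re] at hG ⊢
  gcongr

theorem summable_gammaZetaTerm {s : ℂ} (hs : 1 < s.re) : Summable (gammaZetaTerm s) := by
  have hσ : 0 < s.re := by linarith
  have hnonneg : 0 ≤ fun p => (gammaZetaTerm s.re p).re := fun p =>
    (norm_nonneg _).trans (by simpa using norm_gammaZetaTerm_le (s := s.re) (by simpa) p)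
  refine Summable.of_norm_bounded ((summable_prod_of_nonneg hnonneg).mpr
    ⟨fun n => (hasSum_re (hasSum_gammaZetaTerm_fixed_fst (by simpa) n)).summable, ?_⟩)
    (norm_gammaZetaTerm_le hσ)
  simp_rw [(hasSum_re (hasSum_gammaZetaTerm_fixed_fst (s := s.re) (by simpa) _)).tsum_eq]
  exact (hasSum_re ((hasSum_nat_add_one_cpow_neg_sub_nat_add_two_cpow_neg
    (s := s.re) (by simpa)).mul_left (Gamma s.re))).summable

theorem hasSum_gammaZetaTerm {s : ℂ} (hs : 1 < s.re) : HasSum (gammaZetaTerm s) (Gamma s) := by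
  have hcols := (summable_gammaZetaTerm hs).hasSum.prod_fiberwise
    (hasSum_gammaZetaTerm_fixed_fst (by linarith))
  have htel := (hasSum_nat_add_one_cpow_neg_sub_nat_add_two_cpow_neg hs).mul_left (Gamma s)
  rw [mul_one] at htel
  rw [htel.unique hcols]
  exact (summable_gammaZetaTerm hs).hasSum

/-- `∑_{k=1}^∞ [Γ(α+k)/k!] (ζ(α+k)-1) = Γ(α)` for `Re α > 1` (the sum over `k ≥ 1` is written
with index shifted by 1). -/
theorem gamma_zeta_sum (α : ℂ) (hα : 1 < α.re) :
    HasSum (fun k : ℕ =>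
        Complex.Gamma (α + k + 1) / ((k + 1).factorial : ℂ) * (riemannZeta (α + k + 1) - 1))
      (Complex.Gamma α) :=
  ((Equiv.prodComm ℕ ℕ).hasSum_iff.mpr (hasSum_gammaZetaTerm hα)).prod_fiberwise
    (hasSum_gammaZetaTerm_fixed_snd (by linarith))
end

section
/- For complex α with Re(α) > 1, Σ_{k=1}^∞ [Γ(α+k)/k!] ζ′(α+k) = Γ(α) ψ(α) ζ(α) − Σ_{k=0}^∞ [Γ(α+k)/k!] ψ(α+k) {ζ(α+k) − 1}, where both series converge absolutely. -/
/-!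
For `Re s > 1` and `n ≥ 0`, the binomial series `(1 - x)^{-s} = ∑ Γ(s+k)/(Γ(s) k!) x^k` at
`x = 1/(n+2)` gives `∑_k Γ(s+k)/k! (n+2)^{-s-k} = Γ(s) (n+1)^{-s}`. Summing this absolutely
convergent double series over `n` first or over `k` first yields
`∑_k Γ(s+k)/k! (ζ(s+k) - 1) = Γ(s) ζ(s)`. On a strip `a ≤ Re s ≤ b` with `a > 1` the terms are
bounded by a multiple of the summable `(Γ(a+k) + Γ(b+k))/(k! 2^k)`, so the series may be
differentiated term by term; Cauchy's estimate makes the differentiated series, and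
`∑_k Γ(s+k)/k! ζ'(s+k)`, absolutely convergent. Writing `Γ' = Γ ψ` and splitting off the `k = 0`
term of the latter gives the identity.
-/

open scoped BigOperators

/-- The digamma function `ψ(z) = Γ'(z)/Γ(z)`. -/
noncomputable def cpsi (z : ℂ) : ℂ := deriv Complex.Gamma z / Complex.Gamma z

open Metric Set

lemma Gamma_mul_cpsi {z : ℂ} (hz : Complex.Gamma z ≠ 0) :
    Complex.Gamma z * cpsi z = deriv Complex.Gamma z := by
  rw [cpsi, mul_div_cancel₀ _ hz]

namespace Complex

lemma ne_neg_natCast_of_re_pos {s : ℂ} (hs : 0 < s.re) (m : ℕ) : s ≠ -m := by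
  rintro rfl
  simp at hs
  linarith [(m.cast_nonneg : (0 : ℝ) ≤ m)]

lemma norm_Gamma_le_Gamma_re {s : ℂ} (hs : 0 < s.re) : ‖Gamma s‖ ≤ Real.Gamma s.re := by
  rw [Gamma_eq_integral hs, Real.Gamma_eq_integral hs, GammaIntegral]
  refine (MeasureTheory.norm_integral_le_integral_norm _).trans_eq
    (MeasureTheory.setIntegral_congr_fun measurableSet_Ioi fun t (ht : 0 < t) => ?_)
  simp [norm_cpow_eq_rpow_re_of_pos ht, norm_exp]

lemma Gamma_add_nat_div_factorial_eq_mul_choose {s : ℂ} (hs : ∀ m : ℕ, s ≠ -m) (k : ℕ) :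
    Gamma (s + k) / k.factorial = Gamma s * Ring.choose (s + k - 1) k := by
  have h := Ring.factorial_nsmul_multichoose_eq_ascPochhammer s k
  rw [Ring.multichoose_eq, Polynomial.ascPochhammer_smeval_eq_eval,
    ← Gamma_add_nat_div_Gamma_eq s hs, nsmul_eq_mul, eq_div_iff (Gamma_ne_zero hs)] at h
  rw [← h, mul_assoc, mul_div_cancel_left₀ _ (Nat.cast_ne_zero.2 k.factorial_ne_zero), mul_comm]

theorem hasSum_Gamma_add_div_factorial_mul_pow {s : ℂ} (hs : ∀ m : ℕ, s ≠ -m) {x : ℂ}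
    (hx : ‖x‖ < 1) :
    HasSum (fun k : ℕ => Gamma (s + k) / k.factorial * x ^ k) (Gamma s / (1 - x) ^ s) := by
  have hx' : x ∈ eball (0 : ℂ) 1 := by
    rw [mem_eball, edist_zero_right, ← ENNReal.coe_one, enorm_lt_coe]
    exact_mod_cast hx
  have h := ((one_div_one_sub_cpow_hasFPowerSeriesOnBall_zero s).hasSum hx').mul_left (Gamma s)
  simp only [FormalMultilinearSeries.ofScalars_apply_eq, smul_eq_mul, zero_add] at h
  simpa only [Gamma_add_nat_div_factorial_eq_mul_choose hs, mul_assoc, mul_one_div] using h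

theorem hasSum_Gamma_add_div_factorial_div_add_one_cpow {s : ℂ} (hs : ∀ m : ℕ, s ≠ -m)
    {t : ℝ} (ht : 0 < t) :
    HasSum (fun k : ℕ => Gamma (s + k) / k.factorial / ((t : ℂ) + 1) ^ (s + k))
      (Gamma s / (t : ℂ) ^ s) := by
  set x : ℝ := (t + 1)⁻¹ with hx
  have ht1 : (t : ℂ) + 1 ≠ 0 := by exact_mod_cast (by positivity : t + 1 ≠ 0)
  have hx_norm : ‖(x : ℂ)‖ < 1 := by
    rw [norm_real, Real.norm_of_nonneg (by positivity)]
    exact inv_lt_one_of_one_lt₀ (by linarith)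
  have hx_le : 0 ≤ 1 - x := sub_nonneg.2 (inv_le_one_of_one_le₀ (by linarith))
  -- `t = (1 - x) (t + 1)`, and `cpow` is multiplicative on nonnegative reals.
  have hsplit : (t : ℂ) ^ s = ((1 - x : ℝ) : ℂ) ^ s * ((t + 1 : ℝ) : ℂ) ^ s := by
    rw [← mul_cpow_ofReal_nonneg hx_le (by positivity), ← ofReal_mul, hx]
    congr 2
    field_simp
    ring
  rw [show Gamma s / (t : ℂ) ^ s = Gamma s / (1 - (x : ℂ)) ^ s / ((t : ℂ) + 1) ^ s by
    rw [hsplit]; push_cast; ring]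
  refine ((hasSum_Gamma_add_div_factorial_mul_pow hs hx_norm).div_const _).congr_fun fun k => ?_
  rw [cpow_add _ _ ht1, cpow_natCast, hx, ofReal_inv, inv_pow]
  push_cast
  ring

theorem summable_norm_deriv_of_summable_norm {ι E : Type*} [NormedAddCommGroup E]
    [NormedSpace ℂ E] {F : ι → ℂ → E} {U : Set ℂ} {z : ℂ} {u : ι → ℝ} (hu : Summable u)
    (hf : ∀ i, DifferentiableOn ℂ (F i) U) (hU : IsOpen U)
    (hF_le : ∀ i, ∀ w ∈ U, ‖F i w‖ ≤ u i) (hz : z ∈ U) :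
    Summable fun i => ‖deriv (F i) z‖ := by
  obtain ⟨r, hr, hrU⟩ := nhds_basis_closedBall.mem_iff.1 (hU.mem_nhds hz)
  refine .of_nonneg_of_le (fun i => norm_nonneg _) (fun i => ?_) (hu.div_const r)
  exact norm_deriv_le_of_forall_mem_sphere_norm_le hr ((hf i).diffContOnCl_ball hrU)
    fun w hw => hF_le i w (hrU (sphere_subset_closedBall hw))

end Complex

namespace Real

theorem hasSum_Gamma_add_div_factorial_div_add_one_rpow {σ : ℝ} (hσ : 0 < σ) {t : ℝ}
    (ht : 0 < t) :
    HasSum (fun k : ℕ => Gamma (σ + k) / k.factorial / (t + 1) ^ (σ + k)) (Gamma σ / t ^ σ) := by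
  rw [← Complex.hasSum_ofReal]
  push_cast [Complex.ofReal_cpow ht.le, Complex.ofReal_cpow (by positivity : 0 ≤ t + 1),
    ← Complex.Gamma_ofReal]
  exact Complex.hasSum_Gamma_add_div_factorial_div_add_one_cpow
    (Complex.ne_neg_natCast_of_re_pos (by simpa using hσ)) ht

theorem summable_Gamma_add_div_factorial_div_two_pow {c : ℝ} (hc : 0 < c) :
    Summable fun k : ℕ => Gamma (c + k) / k.factorial / 2 ^ k := by
  refine ((hasSum_Gamma_add_div_factorial_div_add_one_rpow hc one_pos).summable.mul_left
    (2 ^ c)).congr fun k => ?_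
  rw [one_add_one_eq_two, rpow_add two_pos, rpow_natCast]
  field_simp

theorem summable_Gamma_add_div_factorial_div_nat_add_two_rpow {σ : ℝ} (hσ : 1 < σ) :
    Summable fun p : ℕ × ℕ => Gamma (σ + p.2) / p.2.factorial / ((p.1 : ℝ) + 2) ^ (σ + p.2) := by
  have hrow (n : ℕ) : HasSum (fun k : ℕ => Gamma (σ + k) / k.factorial / ((n : ℝ) + 2) ^ (σ + k))
      (Gamma σ / ((n : ℝ) + 1) ^ σ) := by
    have := hasSum_Gamma_add_div_factorial_div_add_one_rpow (by linarith) (t := n + 1)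
      (by positivity)
    rwa [show (n : ℝ) + 1 + 1 = n + 2 by ring] at this
  refine (summable_prod_of_nonneg fun p => by positivity).2 ⟨fun n => (hrow n).summable, ?_⟩
  simp_rw [(hrow _).tsum_eq, div_eq_mul_one_div (Gamma σ)]
  exact_mod_cast ((summable_nat_add_iff 1).2 (summable_one_div_nat_rpow.2 hσ)).mul_left _

theorem Gamma_le_add_of_mem_Icc {a b x : ℝ} (ha : 0 < a) (hx : x ∈ Icc a b) :
    Gamma x ≤ Gamma a + Gamma b := by
  have hb : 0 < b := ha.trans_le (hx.1.trans hx.2)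
  exact (convexOn_Gamma.le_max_of_mem_Icc ha hb hx).trans
    (max_le_add_of_nonneg (Gamma_pos_of_pos ha).le (Gamma_pos_of_pos hb).le)

end Real

theorem hasSum_one_div_nat_add_one_cpow {s : ℂ} (hs : 1 < s.re) :
    HasSum (fun n : ℕ => 1 / ((n : ℂ) + 1) ^ s) (riemannZeta s) := by
  have h := (Complex.summable_one_div_nat_cpow.2 hs).hasSum_iff.2
    (zeta_eq_tsum_one_div_nat_cpow hs).symm
  rw [← hasSum_nat_add_iff' 1] at h
  simpa [Complex.zero_cpow (Complex.ne_zero_of_one_lt_re hs)] using h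

theorem hasSum_one_div_nat_add_two_cpow {s : ℂ} (hs : 1 < s.re) :
    HasSum (fun n : ℕ => 1 / ((n : ℂ) + 2) ^ s) (riemannZeta s - 1) := by
  have h := hasSum_one_div_nat_add_one_cpow hs
  rw [← hasSum_nat_add_iff' 1] at h
  simpa [add_assoc, one_add_one_eq_two] using h

theorem norm_riemannZeta_sub_one_le {a : ℝ} (ha : 1 < a) {s : ℂ} (hs : a ≤ s.re) :
    ‖riemannZeta s - 1‖ ≤ 2 ^ (a - s.re) * ∑' n : ℕ, 1 / ((n : ℝ) + 2) ^ a := by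
  have hsum : Summable fun n : ℕ => 1 / ((n : ℝ) + 2) ^ a := by
    simpa using (summable_nat_add_iff 2).2 (Real.summable_one_div_nat_rpow.2 ha)
  have hterm (n : ℕ) : ‖1 / ((n : ℂ) + 2) ^ s‖ ≤ 2 ^ (a - s.re) * (1 / ((n : ℝ) + 2) ^ a) := by
    have hn : (0 : ℝ) < n + 2 := by positivity
    rw [norm_div, norm_one, show (n : ℂ) + 2 = ((n + 2 : ℝ) : ℂ) by push_cast; rfl,
      Complex.norm_cpow_eq_rpow_re_of_pos hn]
    calc 1 / ((n : ℝ) + 2) ^ s.re = ((n : ℝ) + 2) ^ (a - s.re) * (1 / ((n : ℝ) + 2) ^ a) := by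
          rw [Real.rpow_sub hn]; field_simp
      _ ≤ 2 ^ (a - s.re) * (1 / ((n : ℝ) + 2) ^ a) := by
          gcongr ?_ * _
          exact Real.rpow_le_rpow_of_nonpos two_pos (by linarith) (by linarith)
  rw [← (hasSum_one_div_nat_add_two_cpow (by linarith)).tsum_eq, ← tsum_mul_left]
  exact tsum_of_norm_bounded (hsum.mul_left _).hasSum hterm

theorem norm_deriv_riemannZeta_le {a ρ : ℝ} (ha : 1 < a) (hρ : 0 < ρ) {z : ℂ}
    (hz : a + ρ ≤ z.re) :
    ‖deriv riemannZeta z‖ ≤ 2 ^ (a + ρ - z.re) * (∑' n : ℕ, 1 / ((n : ℝ) + 2) ^ a) / ρ := by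
  have hre {w : ℂ} (hw : w ∈ closedBall z ρ) : z.re - ρ ≤ w.re := by
    have h := (Complex.abs_re_le_norm (w - z)).trans (mem_closedBall_iff_norm.1 hw)
    rw [Complex.sub_re, abs_le] at h
    linarith [h.1]
  have hd : DifferentiableOn ℂ (fun w => riemannZeta w - 1) (closedBall z ρ) := fun w hw =>
    ((differentiableAt_riemannZeta (by rintro rfl; linarith [hre hw, Complex.one_re])).sub_const
      1).differentiableWithinAt
  have hbound : ∀ w ∈ sphere z ρ,
      ‖riemannZeta w - 1‖ ≤ 2 ^ (a + ρ - z.re) * ∑' n : ℕ, 1 / ((n : ℝ) + 2) ^ a := by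
    intro w hw
    have hw' := hre (sphere_subset_closedBall hw)
    refine (norm_riemannZeta_sub_one_le ha (by linarith)).trans ?_
    gcongr ?_ * _
    exact Real.rpow_le_rpow_of_exponent_le one_le_two (by linarith)
  simpa [deriv_sub_const] using
    Complex.norm_deriv_le_of_forall_mem_sphere_norm_le hρ (hd.diffContOnCl_ball subset_rfl) hbound

theorem hasSum_Gamma_add_div_factorial_mul_riemannZeta_sub_one {s : ℂ} (hs : 1 < s.re) :
    HasSum (fun k : ℕ => Complex.Gamma (s + k) / k.factorial * (riemannZeta (s + k) - 1))
      (Complex.Gamma s * riemannZeta s) := by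
  have hre (k : ℕ) : (s + k).re = s.re + k := by simp
  have hs0 : 0 < s.re := by linarith
  set F : ℕ × ℕ → ℂ := fun p =>
    Complex.Gamma (s + p.2) / p.2.factorial / ((p.1 : ℂ) + 2) ^ (s + p.2)
  have hF : Summable F := by
    refine .of_norm_bounded (Real.summable_Gamma_add_div_factorial_div_nat_add_two_rpow hs) ?_
    rintro ⟨n, k⟩
    have hn : (0 : ℝ) < n + 2 := by positivity
    simp only [F, norm_div, Complex.norm_natCast]
    rw [show (n : ℂ) + 2 = ((n + 2 : ℝ) : ℂ) by push_cast; rfl,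
      Complex.norm_cpow_eq_rpow_re_of_pos hn, hre]
    gcongr
    simpa [hre] using Complex.norm_Gamma_le_Gamma_re (s := s + k) (by rw [hre]; positivity)
  have hrow (n : ℕ) : HasSum (fun k => F (n, k)) (Complex.Gamma s / ((n : ℂ) + 1) ^ s) := by
    have := Complex.hasSum_Gamma_add_div_factorial_div_add_one_cpow
      (Complex.ne_neg_natCast_of_re_pos hs0) (t := n + 1) (by positivity)
    push_cast at this
    rwa [show (n : ℂ) + 1 + 1 = n + 2 by ring] at this
  have hcol (k : ℕ) : HasSum (fun n => F (n, k))
      (Complex.Gamma (s + k) / k.factorial * (riemannZeta (s + k) - 1)) :=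
    ((hasSum_one_div_nat_add_two_cpow (s := s + k) (by rw [hre]; linarith)).mul_left
      (Complex.Gamma (s + k) / k.factorial)).congr_fun fun n => by simp only [F]; ring
  have htotal : HasSum F (Complex.Gamma s * riemannZeta s) := by
    have h := hF.hasSum.prod_fiberwise hrow
    simp_rw [← mul_one_div (Complex.Gamma s)] at h
    rw [((hasSum_one_div_nat_add_one_cpow hs).mul_left (Complex.Gamma s)).unique h]
    exact hF.hasSum
  exact ((Equiv.prodComm ℕ ℕ).hasSum_iff.2 htotal).prod_fiberwise hcol

theorem norm_Gamma_add_div_factorial_mul_riemannZeta_sub_one_le {a b : ℝ} (ha : 1 < a) {w : ℂ}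
    (haw : a ≤ w.re) (hwb : w.re ≤ b) (k : ℕ) :
    ‖Complex.Gamma (w + k) / k.factorial * (riemannZeta (w + k) - 1)‖
      ≤ (Real.Gamma (a + k) + Real.Gamma (b + k)) / k.factorial / 2 ^ k
        * ∑' n : ℕ, 1 / ((n : ℝ) + 2) ^ a := by
  have hre : (w + k).re = w.re + k := by simp
  have hk : (0 : ℝ) ≤ k := k.cast_nonneg
  have hΓ : ‖Complex.Gamma (w + k)‖ ≤ Real.Gamma (a + k) + Real.Gamma (b + k) := by
    refine (Complex.norm_Gamma_le_Gamma_re (by rw [hre]; linarith)).trans ?_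
    rw [hre]
    exact Real.Gamma_le_add_of_mem_Icc (by linarith) ⟨by linarith, by linarith⟩
  have hζ : ‖riemannZeta (w + k) - 1‖ ≤ 1 / 2 ^ k * ∑' n : ℕ, 1 / ((n : ℝ) + 2) ^ a := by
    refine (norm_riemannZeta_sub_one_le ha (by rw [hre]; linarith)).trans ?_
    gcongr ?_ * _
    rw [← Real.rpow_natCast, one_div, ← Real.rpow_neg two_pos.le, hre]
    exact Real.rpow_le_rpow_of_exponent_le one_le_two (by linarith)
  rw [norm_mul, norm_div, Complex.norm_natCast]
  calc ‖Complex.Gamma (w + k)‖ / k.factorial * ‖riemannZeta (w + k) - 1‖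
      ≤ (Real.Gamma (a + k) + Real.Gamma (b + k)) / k.factorial
          * (1 / 2 ^ k * ∑' n : ℕ, 1 / ((n : ℝ) + 2) ^ a) := by
        gcongr
        exact div_nonneg ((norm_nonneg _).trans hΓ) k.factorial.cast_nonneg
    _ = _ := by ring

theorem hasDerivAt_Gamma_add_div_factorial_mul_riemannZeta_sub_one {w : ℂ} (hw : 1 < w.re)
    (k : ℕ) :
    HasDerivAt (fun z => Complex.Gamma (z + k) / k.factorial * (riemannZeta (z + k) - 1))
      (deriv Complex.Gamma (w + k) / k.factorial * (riemannZeta (w + k) - 1)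
        + Complex.Gamma (w + k) / k.factorial * deriv riemannZeta (w + k)) w := by
  have hre : 1 < (w + k).re := by simp; linarith [(k.cast_nonneg : (0 : ℝ) ≤ k)]
  have hΓ := (Complex.differentiableAt_Gamma _
    (Complex.ne_neg_natCast_of_re_pos (by linarith))).hasDerivAt.comp_add_const w (k : ℂ)
  have hζ := (differentiableAt_riemannZeta (s := w + k)
    (by rintro h; simp [h] at hre)).hasDerivAt.comp_add_const w (k : ℂ)
  exact (hΓ.div_const _).mul (hζ.sub_const 1)

theorem summable_norm_and_hasSum_deriv_Gamma_mul_riemannZeta {s : ℂ} (hs : 1 < s.re) :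
    Summable (fun k : ℕ => ‖deriv Complex.Gamma (s + k) / k.factorial * (riemannZeta (s + k) - 1)
        + Complex.Gamma (s + k) / k.factorial * deriv riemannZeta (s + k)‖) ∧
    HasSum (fun k : ℕ => deriv Complex.Gamma (s + k) / k.factorial * (riemannZeta (s + k) - 1)
        + Complex.Gamma (s + k) / k.factorial * deriv riemannZeta (s + k))
      (deriv Complex.Gamma s * riemannZeta s + Complex.Gamma s * deriv riemannZeta s) := by
  obtain ⟨a, ha, has⟩ := exists_between hs
  obtain ⟨b, hsb⟩ := exists_gt s.re
  set U := Complex.re ⁻¹' Ioo a b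
  have hU : IsOpen U := isOpen_Ioo.preimage Complex.continuous_re
  have hsU : s ∈ U := ⟨has, hsb⟩
  have hU1 {w : ℂ} (hw : w ∈ U) : 1 < w.re := ha.trans hw.1
  have hu : Summable fun k : ℕ => (Real.Gamma (a + k) + Real.Gamma (b + k)) / k.factorial / 2 ^ k
      * ∑' n : ℕ, 1 / ((n : ℝ) + 2) ^ a := by
    simp_rw [add_div]
    exact ((Real.summable_Gamma_add_div_factorial_div_two_pow (by linarith)).add
      (Real.summable_Gamma_add_div_factorial_div_two_pow (by linarith))).mul_right _
  have hdiff (k : ℕ) : DifferentiableOn ℂ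
      (fun z => Complex.Gamma (z + k) / k.factorial * (riemannZeta (z + k) - 1)) U := fun w hw =>
    (hasDerivAt_Gamma_add_div_factorial_mul_riemannZeta_sub_one (hU1 hw) k).differentiableAt
      |>.differentiableWithinAt
  have hbound (k : ℕ) (w : ℂ) (hw : w ∈ U) :=
    norm_Gamma_add_div_factorial_mul_riemannZeta_sub_one_le ha hw.1.le hw.2.le k
  have hnorm := Complex.summable_norm_deriv_of_summable_norm hu hdiff hU hbound hsU
  have h := Complex.hasSum_deriv_of_summable_norm hu hdiff hU hbound hsU
  have hsum : (fun w => ∑' k : ℕ, Complex.Gamma (w + k) / k.factorial * (riemannZeta (w + k) - 1))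
      =ᶠ[nhds s] fun w => Complex.Gamma w * riemannZeta w :=
    Filter.eventually_of_mem (hU.mem_nhds hsU) fun w hw =>
      (hasSum_Gamma_add_div_factorial_mul_riemannZeta_sub_one (hU1 hw)).tsum_eq
  have hΓ := Complex.differentiableAt_Gamma s (Complex.ne_neg_natCast_of_re_pos (by linarith))
  have hζ := differentiableAt_riemannZeta (s := s) (by rintro rfl; simp at hs)
  rw [hsum.deriv_eq, deriv_fun_mul hΓ hζ] at h
  simp only [(hasDerivAt_Gamma_add_div_factorial_mul_riemannZeta_sub_one hs _).deriv] at hnorm h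
  exact ⟨hnorm, h⟩

theorem summable_norm_Gamma_add_div_factorial_mul_deriv_riemannZeta {s : ℂ} (hs : 1 < s.re) :
    Summable fun k : ℕ => ‖Complex.Gamma (s + k) / k.factorial * deriv riemannZeta (s + k)‖ := by
  obtain ⟨a, ha, has⟩ := exists_between hs
  have hρ : 0 < s.re - a := sub_pos.2 has
  set T := ∑' n : ℕ, 1 / ((n : ℝ) + 2) ^ a
  refine .of_nonneg_of_le (fun _ => norm_nonneg _) (fun k => ?_)
    ((Real.summable_Gamma_add_div_factorial_div_two_pow (c := s.re) (by linarith)).mul_right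
      (T / (s.re - a)))
  have hre : (s + k).re = s.re + k := by simp
  have h2 : (2 : ℝ) ^ (a + (s.re - a) - (s + k).re) = 1 / 2 ^ k := by
    rw [hre, show a + (s.re - a) - (s.re + k) = -(k : ℝ) by ring, Real.rpow_neg two_pos.le,
      Real.rpow_natCast, one_div]
  rw [norm_mul, norm_div, Complex.norm_natCast]
  calc ‖Complex.Gamma (s + k)‖ / k.factorial * ‖deriv riemannZeta (s + k)‖
      ≤ Real.Gamma (s.re + k) / k.factorial
          * (2 ^ (a + (s.re - a) - (s + k).re) * T / (s.re - a)) := by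
        gcongr
        · simpa [hre] using Complex.norm_Gamma_le_Gamma_re (s := s + k) (by rw [hre]; positivity)
        · exact norm_deriv_riemannZeta_le ha hρ
            (by rw [hre]; linarith [(k.cast_nonneg : (0 : ℝ) ≤ k)])
    _ = _ := by rw [h2]; ring

/-- `∑_{k=1}^∞ [Γ(α+k)/k!] ζ'(α+k) = Γ(α) ψ(α) ζ(α) - ∑_{k=0}^∞ [Γ(α+k)/k!] ψ(α+k) (ζ(α+k)-1)`
for `Re α > 1`, both series converging absolutely (the first, over `k ≥ 1`, is written with
index shifted by 1). -/
theorem gamma_zeta_deriv_sum (α : ℂ) (hα : 1 < α.re) :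
    Summable (fun k : ℕ =>
        ‖Complex.Gamma (α + k + 1) / ((k + 1).factorial : ℂ) * deriv riemannZeta (α + k + 1)‖) ∧
    Summable (fun k : ℕ =>
        ‖Complex.Gamma (α + k) / (k.factorial : ℂ) * cpsi (α + k) * (riemannZeta (α + k) - 1)‖) ∧
    ∑' k : ℕ, Complex.Gamma (α + k + 1) / ((k + 1).factorial : ℂ) * deriv riemannZeta (α + k + 1)
      = Complex.Gamma α * cpsi α * riemannZeta α
        - ∑' k : ℕ, Complex.Gamma (α + k) / (k.factorial : ℂ) * cpsi (α + k)
            * (riemannZeta (α + k) - 1) := by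
  set A : ℕ → ℂ := fun k => Complex.Gamma (α + k) / k.factorial * deriv riemannZeta (α + k)
  set B : ℕ → ℂ := fun k =>
    Complex.Gamma (α + k) / k.factorial * cpsi (α + k) * (riemannZeta (α + k) - 1)
  have hB_eq (k : ℕ) :
      B k = deriv Complex.Gamma (α + k) / k.factorial * (riemannZeta (α + k) - 1) := by
    rw [← Gamma_mul_cpsi (Complex.Gamma_ne_zero_of_re_pos (by simp; positivity))]
    ring
  obtain ⟨hBA_norm, hBA⟩ := summable_norm_and_hasSum_deriv_Gamma_mul_riemannZeta hα
  simp only [← hB_eq, ← Gamma_mul_cpsi (Complex.Gamma_ne_zero_of_re_pos (by linarith : 0 < α.re))]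
    at hBA_norm hBA
  have hA : Summable fun k => ‖A k‖ :=
    summable_norm_Gamma_add_div_factorial_mul_deriv_riemannZeta hα
  have hB : Summable fun k => ‖B k‖ := .of_nonneg_of_le (fun _ => norm_nonneg _)
    (fun k => by simpa only [add_sub_cancel_right] using norm_sub_le (B k + A k) (A k))
    (hBA_norm.add hA)
  have hA_succ (k : ℕ) : A (k + 1) = Complex.Gamma (α + k + 1) / ((k + 1).factorial : ℂ)
      * deriv riemannZeta (α + k + 1) := by
    simp only [A]; push_cast; ring_nf
  have hA_zero : A 0 = Complex.Gamma α * deriv riemannZeta α := by simp [A]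
  refine ⟨?_, hB, ?_⟩
  · simpa only [hA_succ] using (summable_nat_add_iff 1).2 hA
  · simp only [← hA_succ]
    linear_combination (hB.of_norm.hasSum.add hA.of_norm.hasSum).unique hBA
      - hA.of_norm.tsum_eq_zero_add - hA_zero
end
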